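/- Let S = {exp(kπi/5) : k = 0, 1, ..., 9} ⊂ ℂ be the decagonal shell of tenth roots of unity. Then: (i) S is closed under negation, i.e., −z ∈ S for every z ∈ S; (ii) for all α, β ∈ S the Cartan coefficient 2·Re(β·conj(α)) lies in ℤ + ℤφ ⊂ ℝ; (iii) for all α, β ∈ S the reflection image β − (2·Re(β·conj(α)))·α again lies in S (note each α ∈ S has |α| = 1, so the reflection denominator is 1). -/
import Mathlib


noncomputable def φ : ℝ := (1 + Real.sqrt 5) / 2

/-- The golden integer ring `ℤ + ℤφ` as a subset of `ℝ`. -/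
def Zφ : Set ℝ := {x | ∃ a b : ℤ, x = (a : ℝ) + (b : ℝ) * φ}

/-- The decagonal shell of tenth roots of unity. -/
noncomputable def decagonShell : Set ℂ :=
  {z | ∃ k : ℕ, k < 10 ∧ z = Complex.exp ((k : ℂ) * (Real.pi : ℂ) * Complex.I / 5)}

open Complex Real

lemma mem_shell (m : ℤ) :
    Complex.exp ((m : ℂ) * (Real.pi : ℂ) * Complex.I / 5) ∈ decagonShell := by
  refine ⟨(m % 10).toNat, ?_, ?_⟩
  · have h := Int.emod_lt_of_pos m (by norm_num : (0:ℤ) < 10)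
    omega
  · have h0 : (0:ℤ) ≤ m % 10 := Int.emod_nonneg m (by norm_num)
    have hm : (m : ℂ) = ((m % 10).toNat : ℂ) + 10 * ((m / 10 : ℤ) : ℂ) := by
      have h : ((m % 10).toNat : ℤ) + 10 * (m / 10) = m := by
        rw [Int.toNat_of_nonneg h0]; omega
      exact_mod_cast congrArg (fun x : ℤ => (x : ℂ)) h.symm
    rw [hm]
    have h2 : (((m % 10).toNat : ℂ) + 10 * ((m / 10 : ℤ) : ℂ)) * (Real.pi : ℂ) * Complex.I / 5
        = ((m % 10).toNat : ℂ) * (Real.pi : ℂ) * Complex.I / 5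
          + ((m / 10 : ℤ) : ℂ) * (2 * (Real.pi : ℂ) * Complex.I) := by ring
    rw [h2, Complex.exp_add, Complex.exp_int_mul_two_pi_mul_I, mul_one]

lemma two_cos_mem (m : ℤ) : 2 * Real.cos ((m : ℝ) * Real.pi / 5) ∈ Zφ := by
  have h0 : (0:ℤ) ≤ m % 10 := Int.emod_nonneg m (by norm_num)
  have h10 : m % 10 < 10 := Int.emod_lt_of_pos m (by norm_num)
  have hper : Real.cos ((m : ℝ) * Real.pi / 5)
      = Real.cos (((m % 10 : ℤ) : ℝ) * Real.pi / 5) := by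
    have h : (m : ℝ) * Real.pi / 5
        = ((m % 10 : ℤ) : ℝ) * Real.pi / 5 + ((m / 10 : ℤ) : ℝ) * (2 * Real.pi) := by
      have h' : ((m % 10 : ℤ) : ℝ) + 10 * ((m / 10 : ℤ) : ℝ) = (m : ℝ) := by
        have : (m % 10) + 10 * (m / 10) = m := by omega
        exact_mod_cast congrArg (fun x : ℤ => (x : ℝ)) this
      rw [← h']; ring
    rw [h, Real.cos_add_int_mul_two_pi]
  rw [hper]
  have c1 : Real.cos (Real.pi / 5) = (1 + Real.sqrt 5) / 4 := Real.cos_pi_div_five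
  have s5 : Real.sqrt 5 ^ 2 = 5 := Real.sq_sqrt (by norm_num)
  have c2 : Real.cos (2 * Real.pi / 5) = (Real.sqrt 5 - 1) / 4 := by
    have h := Real.cos_two_mul (Real.pi / 5)
    rw [c1] at h
    have h2 : 2 * (Real.pi / 5) = 2 * Real.pi / 5 := by ring
    rw [h2] at h
    rw [h]; nlinarith [s5]
  interval_cases h : (m % 10)
  · refine ⟨2, 0, ?_⟩
    norm_num
  · refine ⟨0, 1, ?_⟩
    push_cast
    rw [one_mul, c1]; unfold φ; ring
  · refine ⟨-1, 1, ?_⟩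
    push_cast
    rw [c2]; unfold φ; push_cast; ring
  · refine ⟨1, -1, ?_⟩
    have e : ((3:ℝ)) * Real.pi / 5 = Real.pi - 2 * Real.pi / 5 := by ring
    push_cast
    rw [e, Real.cos_pi_sub, c2]; unfold φ; push_cast; ring
  · refine ⟨0, -1, ?_⟩
    have e : ((4:ℝ)) * Real.pi / 5 = Real.pi - Real.pi / 5 := by ring
    push_cast
    rw [e, Real.cos_pi_sub, c1]; unfold φ; push_cast; ring
  · refine ⟨-2, 0, ?_⟩
    have e : ((5:ℝ)) * Real.pi / 5 = Real.pi := by ring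
    push_cast
    rw [e, Real.cos_pi]; norm_num
  · refine ⟨0, -1, ?_⟩
    have e : ((6:ℝ)) * Real.pi / 5 = -(4 * Real.pi / 5) + (1:ℤ) * (2 * Real.pi) := by
      push_cast; ring
    have e2 : ((4:ℝ)) * Real.pi / 5 = Real.pi - Real.pi / 5 := by ring
    push_cast
    rw [e, Real.cos_add_int_mul_two_pi, Real.cos_neg, e2, Real.cos_pi_sub, c1]
    unfold φ; push_cast; ring
  · refine ⟨1, -1, ?_⟩
    have e : ((7:ℝ)) * Real.pi / 5 = -(3 * Real.pi / 5) + (1:ℤ) * (2 * Real.pi) := by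
      push_cast; ring
    have e2 : ((3:ℝ)) * Real.pi / 5 = Real.pi - 2 * Real.pi / 5 := by ring
    push_cast
    rw [e, Real.cos_add_int_mul_two_pi, Real.cos_neg, e2, Real.cos_pi_sub, c2]
    unfold φ; push_cast; ring
  · refine ⟨-1, 1, ?_⟩
    have e : ((8:ℝ)) * Real.pi / 5 = -(2 * Real.pi / 5) + (1:ℤ) * (2 * Real.pi) := by
      push_cast; ring
    push_cast
    rw [e, Real.cos_add_int_mul_two_pi, Real.cos_neg, c2]
    unfold φ; push_cast; ring
  · refine ⟨0, 1, ?_⟩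
    have e : ((9:ℝ)) * Real.pi / 5 = -(Real.pi / 5) + (1:ℤ) * (2 * Real.pi) := by
      push_cast; ring
    push_cast
    rw [e, Real.cos_add_int_mul_two_pi, Real.cos_neg, c1]
    unfold φ; ring

lemma conj_term (j : ℕ) :
    (starRingEnd ℂ) ((j : ℂ) * (Real.pi : ℂ) * Complex.I / 5)
      = -((j : ℂ) * (Real.pi : ℂ) * Complex.I / 5) := by
  simp [map_div₀, Complex.conj_I, Complex.conj_ofReal, map_ofNat]
  ring

lemma re_prod (j k : ℕ) :
    (Complex.exp ((j : ℂ) * (Real.pi : ℂ) * Complex.I / 5) *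
      (starRingEnd ℂ) (Complex.exp ((k : ℂ) * (Real.pi : ℂ) * Complex.I / 5))).re
      = Real.cos ((((j : ℤ) - k : ℤ) : ℝ) * Real.pi / 5) := by
  rw [← Complex.exp_conj, conj_term, ← Complex.exp_add]
  have h : (j : ℂ) * (Real.pi : ℂ) * Complex.I / 5
      + -((k : ℂ) * (Real.pi : ℂ) * Complex.I / 5)
      = (((((j : ℤ) - k : ℤ) : ℝ) * Real.pi / 5 : ℝ) : ℂ) * Complex.I := by
    push_cast; ring
  rw [h, Complex.exp_ofReal_mul_I_re]

/-- The decagonal shell is closed under negation, has Cartan coefficients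
`2·Re(β·conj α)` in `ℤ + ℤφ`, and is closed under the reflections `β ↦ β - 2Re(β·conj α)·α`. -/
theorem decagon_root_shell :
    (∀ z ∈ decagonShell, -z ∈ decagonShell) ∧
    (∀ α ∈ decagonShell, ∀ β ∈ decagonShell,
      2 * (β * (starRingEnd ℂ) α).re ∈ Zφ) ∧
    (∀ α ∈ decagonShell, ∀ β ∈ decagonShell,
      β - ((2 * (β * (starRingEnd ℂ) α).re : ℝ) : ℂ) * α ∈ decagonShell) := by
  refine ⟨?_, ?_, ?_⟩
  · rintro z ⟨k, hk, rfl⟩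
    have h : -Complex.exp ((k : ℂ) * (Real.pi : ℂ) * Complex.I / 5)
        = Complex.exp (((k + 5 : ℤ) : ℂ) * (Real.pi : ℂ) * Complex.I / 5) := by
      have e : ((k + 5 : ℤ) : ℂ) * (Real.pi : ℂ) * Complex.I / 5
          = (k : ℂ) * (Real.pi : ℂ) * Complex.I / 5 + (Real.pi : ℂ) * Complex.I := by
        push_cast; ring
      rw [e, Complex.exp_add, Complex.exp_pi_mul_I]; ring
    rw [h]; exact mem_shell _
  · rintro α ⟨k, hk, rfl⟩ β ⟨j, hj, rfl⟩
    rw [re_prod]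
    exact two_cos_mem _
  · rintro α ⟨k, hk, rfl⟩ β ⟨j, hj, rfl⟩
    set a := Complex.exp ((k : ℂ) * (Real.pi : ℂ) * Complex.I / 5) with ha
    set b := Complex.exp ((j : ℂ) * (Real.pi : ℂ) * Complex.I / 5) with hb
    have h1 : (starRingEnd ℂ) a * a = 1 := by
      rw [ha, ← Complex.exp_conj, conj_term, ← Complex.exp_add]
      simp
    have hc : ((2 * (b * (starRingEnd ℂ) a).re : ℝ) : ℂ)
        = b * (starRingEnd ℂ) a + (starRingEnd ℂ) b * a := by
      rw [← Complex.add_conj (b * (starRingEnd ℂ) a)]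
      simp [mul_comm]
    have h2 : b - ((2 * (b * (starRingEnd ℂ) a).re : ℝ) : ℂ) * a
        = -((starRingEnd ℂ) b) * a ^ 2 := by
      rw [hc]
      linear_combination (-b) * h1
    rw [h2]
    have h3 : -((starRingEnd ℂ) b) * a ^ 2
        = Complex.exp (((5 + 2 * (k : ℤ) - j : ℤ) : ℂ) * (Real.pi : ℂ) * Complex.I / 5) := by
      rw [hb, ha, ← Complex.exp_conj, conj_term, sq, ← Complex.exp_add]
      have hm1 : (-1 : ℂ) = Complex.exp ((Real.pi : ℂ) * Complex.I) :=
        Complex.exp_pi_mul_I.symm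
      calc -Complex.exp (-((j : ℂ) * (Real.pi : ℂ) * Complex.I / 5))
            * Complex.exp ((k : ℂ) * (Real.pi : ℂ) * Complex.I / 5
              + (k : ℂ) * (Real.pi : ℂ) * Complex.I / 5)
          = Complex.exp ((Real.pi : ℂ) * Complex.I)
            * Complex.exp (-((j : ℂ) * (Real.pi : ℂ) * Complex.I / 5))
            * Complex.exp ((k : ℂ) * (Real.pi : ℂ) * Complex.I / 5
              + (k : ℂ) * (Real.pi : ℂ) * Complex.I / 5) := by rw [← hm1]; ring
        _ = Complex.exp (((5 + 2 * (k : ℤ) : ℤ) - j : ℂ) * (Real.pi : ℂ) * Complex.I / 5) := by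
              rw [← Complex.exp_add, ← Complex.exp_add]
              congr 1
              push_cast; ring
        _ = Complex.exp (((5 + 2 * (k : ℤ) - j : ℤ) : ℂ) * (Real.pi : ℂ) * Complex.I / 5) := by
              congr 2
              push_cast; ring
    rw [h3]
    exact mem_shell _
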